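/- arXiv:1912.03989 — 6 statements merged into one kernel-verified Lean document; each statement's English description precedes it below -/
import Mathlib

section
/- Let X and Y be Hilbert spaces, a : X × X → ℝ a symmetric, continuous, X-elliptic bilinear form, b : X × Y → ℝ a continuous bilinear form satisfying the inf-sup condition (there exists α > 0 with inf over nonzero μ ∈ Y of sup over nonzero v ∈ X of b(v,μ)/(‖v‖·‖μ‖) ≥ α), Λ ⊆ Y a closed convex set containing 0, and f ∈ X. Then there exists a unique pair (u, λ) ∈ X × Λ such that a(u,v) + b(v,λ) = ⟨f,v⟩ for all v ∈ X and b(u, μ − λ) ≤ 0 for all μ ∈ Λ. -/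
/-!
Eliminating `u = A⁻¹ (f - B λ)` (Lax–Milgram) turns the problem into the variational inequality
`⟪S λ - g, μ - λ⟫ ≥ 0` on `Λ` for the Schur complement `S = B* A⁻¹ B`, which the inf-sup condition
`α ‖μ‖ ≤ ‖B μ‖` makes coercive, and Stampacchia's theorem solves it. For uniqueness, adding the
inequalities of two solutions gives `a (u - u') (u - u') ≤ 0`, so `u = u'`, and then `b v λ = b v λ'`
for all `v`, which the inf-sup condition turns into `λ = λ'`.
-/

open InnerProductSpace

open scoped RealInnerProductSpace InnerProduct

section Stampacchia

variable {F : Type*} [NormedAddCommGroup F] [InnerProductSpace ℝ F]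

theorem exists_mem_forall_inner_sub_sub_nonpos [CompleteSpace F] {K : Set F} (hKc : IsClosed K)
    (hKv : Convex ℝ K) (hK : K.Nonempty) (x : F) : ∃ p ∈ K, ∀ w ∈ K, ⟪x - p, w - p⟫ ≤ 0 := by
  obtain ⟨p, hpK, hp⟩ := exists_norm_eq_iInf_of_complete_convex hK hKc.isComplete hKv x
  exact ⟨p, hpK, (norm_eq_iInf_iff_real_inner_le_zero hKv hpK).mp hp⟩

theorem norm_sub_le_of_inner_sub_sub_nonpos {x y p q : F} (hp : ⟪x - p, q - p⟫ ≤ 0)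
    (hq : ⟪y - q, p - q⟫ ≤ 0) : ‖p - q‖ ≤ ‖x - y‖ := by
  have key : ‖p - q‖ ^ 2 ≤ ⟪x - y, p - q⟫ := by
    have hexp : ⟪x - y, p - q⟫ - ‖p - q‖ ^ 2 = -⟪x - p, q - p⟫ - ⟪y - q, p - q⟫ := by
      simp only [← real_inner_self_eq_norm_sq, inner_sub_left, inner_sub_right, real_inner_comm]
      ring
    linarith
  have hcs := real_inner_le_norm (x - y) (p - q)
  nlinarith [norm_nonneg (p - q), norm_nonneg (x - y)]

theorem norm_sub_smul_apply_le_sqrt (Q : F →L[ℝ] F) {c M : ℝ} (hc : 0 < c)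
    (hQ : ∀ z, c * ‖z‖ ^ 2 ≤ ⟪Q z, z⟫) (hM : ‖Q‖ ≤ M) (hcM : c ≤ M) (z : F) :
    ‖z - (c / M ^ 2) • Q z‖ ≤ √(1 - (c / M) ^ 2) * ‖z‖ := by
  have hM0 : 0 < M := hc.trans_le hcM
  have hQz : ‖Q z‖ ^ 2 ≤ M ^ 2 * ‖z‖ ^ 2 := by
    rw [← mul_pow]
    exact pow_le_pow_left₀ (norm_nonneg _) ((Q.le_opNorm z).trans (by gcongr)) 2
  have hsq : ‖z - (c / M ^ 2) • Q z‖ ^ 2 ≤ (1 - (c / M) ^ 2) * ‖z‖ ^ 2 := by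
    rw [norm_sub_sq_real, real_inner_smul_right, norm_smul, Real.norm_of_nonneg (by positivity),
      real_inner_comm]
    have h₁ := mul_le_mul_of_nonneg_left (hQ z) (by positivity : 0 ≤ 2 * c * M ^ 2)
    have h₂ := mul_le_mul_of_nonneg_left hQz (sq_nonneg c)
    field_simp
    linarith
  rw [← Real.sqrt_sq (norm_nonneg (z - _)), ← Real.sqrt_sq (norm_nonneg z),
    ← Real.sqrt_mul' _ (sq_nonneg _)]
  exact Real.sqrt_le_sqrt hsq

/-- Stampacchia's theorem: `l` is the fixed point of the contraction `x ↦ P (x - ρ • (Q x - g))`,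
`P` the projection onto `K`. -/
theorem exists_mem_forall_inner_sub_sub_nonneg_of_coercive [CompleteSpace F] (Q : F →L[ℝ] F)
    {c : ℝ} (hc : 0 < c) (hQ : ∀ z, c * ‖z‖ ^ 2 ≤ ⟪Q z, z⟫) (g : F) {K : Set F}
    (hKc : IsClosed K) (hKv : Convex ℝ K) (hK : K.Nonempty) :
    ∃ l ∈ K, ∀ μ ∈ K, 0 ≤ ⟪Q l - g, μ - l⟫ := by
  choose P hPK hP using exists_mem_forall_inner_sub_sub_nonpos hKc hKv hK
  -- `c ≤ ‖Q‖` unless `F` is trivial; the `max` covers that case.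
  set M := max ‖Q‖ c
  set ρ := c / M ^ 2
  have hρ : 0 < ρ := by positivity
  set T : F → F := fun x => P (x - ρ • (Q x - g))
  have hk : √(1 - (c / M) ^ 2) < 1 := by
    rw [Real.sqrt_lt' one_pos]
    have : 0 < c / M := by positivity
    nlinarith
  have hT : ContractingWith ⟨_, Real.sqrt_nonneg (1 - (c / M) ^ 2)⟩ T := by
    refine ⟨hk, LipschitzWith.of_dist_le_mul fun x y => ?_⟩
    rw [dist_eq_norm, dist_eq_norm]
    calc ‖T x - T y‖ ≤ ‖(x - ρ • (Q x - g)) - (y - ρ • (Q y - g))‖ :=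
          norm_sub_le_of_inner_sub_sub_nonpos (hP _ _ (hPK _)) (hP _ _ (hPK _))
      _ = ‖(x - y) - ρ • Q (x - y)‖ := by rw [map_sub, smul_sub, smul_sub, smul_sub]; abel_nf
      _ ≤ _ := norm_sub_smul_apply_le_sqrt Q hc hQ (le_max_left _ _) (le_max_right _ _) _
  have : Nonempty F := ⟨0⟩
  set l := ContractingWith.fixedPoint T hT
  have hl : P (l - ρ • (Q l - g)) = l := hT.fixedPoint_isFixedPt
  refine ⟨l, hl ▸ hPK _, fun μ hμ => ?_⟩
  have h := hP (l - ρ • (Q l - g)) μ hμ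
  rw [hl, sub_sub_cancel_left, inner_neg_left, real_inner_smul_left] at h
  nlinarith

end Stampacchia

section Bilinear

variable {E G : Type*} [SeminormedAddCommGroup E] [NormedSpace ℝ E] [SeminormedAddCommGroup G]
  [NormedSpace ℝ G] (a : E → G → ℝ) (h₁ : ∀ u, IsLinearMap ℝ (a u))
  (h₂ : ∀ v, IsLinearMap ℝ fun u => a u v) (C : ℝ) (hC : ∀ u v, |a u v| ≤ C * ‖u‖ * ‖v‖)

noncomputable def ContinuousLinearMap.ofIsLinearMap₂ : E →L[ℝ] G →L[ℝ] ℝ :=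
  LinearMap.mkContinuous₂
    (LinearMap.mk₂ ℝ a (fun _ _ v => (h₂ v).map_add _ _) (fun _ _ v => (h₂ v).map_smul _ _)
      (fun u _ _ => (h₁ u).map_add _ _) (fun _ u _ => (h₁ u).map_smul _ _)) C hC

@[simp]
theorem ContinuousLinearMap.ofIsLinearMap₂_apply (u : E) (v : G) :
    ContinuousLinearMap.ofIsLinearMap₂ a h₁ h₂ C hC u v = a u v :=
  rfl

end Bilinear

section MixedProblem

variable {X Y : Type*} [NormedAddCommGroup X] [InnerProductSpace ℝ X]
  [NormedAddCommGroup Y] [InnerProductSpace ℝ Y]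

theorem iSup_div_norm_mul_norm_le_norm_flip (b : X →L[ℝ] Y →L[ℝ] ℝ) (μ : Y) :
    ⨆ v : {v : X // v ≠ 0}, b v μ / (‖(v : X)‖ * ‖μ‖) ≤ ‖b.flip μ‖ / ‖μ‖ := by
  refine Real.iSup_le (fun v => ?_) (by positivity)
  rw [← div_div]
  refine div_le_div_of_nonneg_right ?_ (norm_nonneg μ)
  rw [div_le_iff₀ (norm_pos_iff.mpr v.2)]
  exact (le_abs_self _).trans ((b.flip μ).le_opNorm _)

theorem IsCoercive.norm_continuousLinearEquivOfBilin_apply_le [CompleteSpace X]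
    {A : X →L[ℝ] X →L[ℝ] ℝ} (hA : IsCoercive A) (u : X) :
    ‖hA.continuousLinearEquivOfBilin u‖ ≤ ‖A‖ * ‖u‖ := by
  change ‖(toDual ℝ X).symm (A u)‖ ≤ _
  rw [LinearIsometryEquiv.norm_map]
  exact A.le_opNorm u

theorem IsCoercive.mul_sq_le_inner_continuousLinearEquivOfBilin_symm [CompleteSpace X]
    {A : X →L[ℝ] X →L[ℝ] ℝ} (hA : IsCoercive A) {m M : ℝ} (hm : 0 ≤ m)
    (hmA : ∀ u, m * ‖u‖ * ‖u‖ ≤ A u u) (hM : ‖A‖ ≤ M) (y : X) :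
    m * ‖y‖ ^ 2 ≤ M ^ 2 * ⟪hA.continuousLinearEquivOfBilin.symm y, y⟫ := by
  set E := hA.continuousLinearEquivOfBilin
  obtain ⟨w, rfl⟩ := E.surjective y
  have hw : ‖E w‖ ≤ M * ‖w‖ :=
    (hA.norm_continuousLinearEquivOfBilin_apply_le w).trans (by gcongr)
  have hw2 : ‖E w‖ ^ 2 ≤ M ^ 2 * ‖w‖ ^ 2 := by
    rw [← mul_pow]; exact pow_le_pow_left₀ (norm_nonneg _) hw 2
  rw [E.symm_apply_apply, real_inner_comm, IsCoercive.continuousLinearEquivOfBilin_apply]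
  have := mul_le_mul_of_nonneg_left (hmA w) (sq_nonneg M)
  nlinarith

def IsMixedSolution (A : X →L[ℝ] X →L[ℝ] ℝ) (b : X →L[ℝ] Y →L[ℝ] ℝ) (Λ : Set Y) (f : X)
    (p : X × Y) : Prop :=
  p.2 ∈ Λ ∧ (∀ v, A p.1 v + b v p.2 = ⟪f, v⟫) ∧ ∀ μ ∈ Λ, b p.1 (μ - p.2) ≤ 0

theorem IsMixedSolution.eq {A : X →L[ℝ] X →L[ℝ] ℝ} (hA : ∀ u, u ≠ 0 → 0 < A u u)
    {b : X →L[ℝ] Y →L[ℝ] ℝ} (hb : Function.Injective b.flip) {Λ : Set Y} {f : X} {p q : X × Y}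
    (hp : IsMixedSolution A b Λ f p) (hq : IsMixedSolution A b Λ f q) : p = q := by
  obtain ⟨u, l⟩ := p
  obtain ⟨u', l'⟩ := q
  obtain ⟨hl, hu, hul⟩ := hp
  obtain ⟨hl', hu', hul'⟩ := hq
  have hdiff : ∀ v, A (u - u') v = b v (l' - l) := fun v => by
    have hsum := (hu v).trans (hu' v).symm
    simp only [map_sub, sub_apply]
    linarith
  have huu' : u = u' := by
    by_contra hne
    have hpos := hA _ (sub_ne_zero.mpr hne)
    have h₁ := hul l' hl'
    have h₂ := hul' l hl
    rw [hdiff] at hpos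
    simp only [map_sub, sub_apply] at hpos h₁ h₂
    linarith
  subst huu'
  have hll' : l = l' := hb <| ContinuousLinearMap.ext fun v => by
    simpa using (hu v).trans (hu' v).symm
  rw [hll']

theorem exists_isMixedSolution [CompleteSpace X] [CompleteSpace Y] (A : X →L[ℝ] X →L[ℝ] ℝ)
    {m : ℝ} (hm : 0 < m) (hmA : ∀ u, m * ‖u‖ * ‖u‖ ≤ A u u) (b : X →L[ℝ] Y →L[ℝ] ℝ) {α : ℝ}
    (hα : 0 < α) (hb : ∀ μ, α * ‖μ‖ ≤ ‖b.flip μ‖) {Λ : Set Y} (hΛc : IsClosed Λ)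
    (hΛv : Convex ℝ Λ) (hΛ : Λ.Nonempty) (f : X) : ∃ p, IsMixedSolution A b Λ f p := by
  have hA : IsCoercive A := ⟨m, hm, hmA⟩
  set E := hA.continuousLinearEquivOfBilin
  set B : Y →L[ℝ] X := (toDual ℝ X).symm.toContinuousLinearEquiv.toContinuousLinearMap ∘L b.flip
  have hB : ∀ μ v, ⟪B μ, v⟫ = b v μ := fun _ _ => toDual_symm_apply
  have hBα : ∀ μ, α * ‖μ‖ ≤ ‖B μ‖ := fun μ => by
    simpa [B, LinearIsometryEquiv.norm_map] using hb μ
  set M := max ‖A‖ m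
  have hM : 0 < M := lt_max_of_lt_right hm
  set Q : Y →L[ℝ] Y := B† ∘L (E.symm : X →L[ℝ] X) ∘L B
  have hQ : ∀ μ, m * α ^ 2 / M ^ 2 * ‖μ‖ ^ 2 ≤ ⟪Q μ, μ⟫ := fun μ => by
    have h : m * ‖B μ‖ ^ 2 ≤ M ^ 2 * ⟪E.symm (B μ), B μ⟫ :=
      hA.mul_sq_le_inner_continuousLinearEquivOfBilin_symm hm.le hmA (le_max_left ‖A‖ m) (B μ)
    have hBμ : (α * ‖μ‖) ^ 2 ≤ ‖B μ‖ ^ 2 := pow_le_pow_left₀ (by positivity) (hBα μ) 2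
    simp only [Q, ContinuousLinearMap.comp_apply, ContinuousLinearMap.adjoint_inner_left,
      ContinuousLinearEquiv.coe_coe]
    rw [div_mul_eq_mul_div, div_le_iff₀ (by positivity)]
    nlinarith
  obtain ⟨l, hlΛ, hl⟩ := exists_mem_forall_inner_sub_sub_nonneg_of_coercive Q (by positivity) hQ
    ((B†) (E.symm f)) hΛc hΛv hΛ
  refine ⟨(E.symm (f - B l), l), hlΛ, fun v => ?_, fun μ hμ => ?_⟩
  · rw [← hA.continuousLinearEquivOfBilin_apply, E.apply_symm_apply, ← hB,
      ← inner_add_left, sub_add_cancel]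
  · have hVI := hl μ hμ
    simp only [Q, ContinuousLinearMap.comp_apply, inner_sub_left,
      ContinuousLinearMap.adjoint_inner_left, ContinuousLinearEquiv.coe_coe] at hVI
    dsimp only
    rw [← hB, real_inner_comm, map_sub, inner_sub_left]
    linarith

theorem existsUnique_isMixedSolution [CompleteSpace X] [CompleteSpace Y]
    (A : X →L[ℝ] X →L[ℝ] ℝ) (hA : IsCoercive A) (b : X →L[ℝ] Y →L[ℝ] ℝ) {α : ℝ} (hα : 0 < α)
    (hb : ∀ μ, α * ‖μ‖ ≤ ‖b.flip μ‖) {Λ : Set Y} (hΛc : IsClosed Λ) (hΛv : Convex ℝ Λ)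
    (hΛ : Λ.Nonempty) (f : X) : ∃! p, IsMixedSolution A b Λ f p := by
  obtain ⟨m, hm, hmA⟩ := hA
  have hA_pos : ∀ u, u ≠ 0 → 0 < A u u := fun u hu =>
    (mul_pos (mul_pos hm (norm_pos_iff.mpr hu)) (norm_pos_iff.mpr hu)).trans_le (hmA u)
  have hb_inj : Function.Injective b.flip := (injective_iff_map_eq_zero _).mpr fun μ hμ =>
    norm_le_zero_iff.mp <| (mul_le_mul_iff_right₀ hα).mp <| by simpa [hμ] using hb μ
  obtain ⟨p, hp⟩ := exists_isMixedSolution A hm hmA b hα hb hΛc hΛv hΛ f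
  exact ⟨p, hp, fun q hq => hq.eq hA_pos hb_inj hp⟩

end MixedProblem

theorem stmt0_general
    {X Y : Type*} [NormedAddCommGroup X] [InnerProductSpace ℝ X] [CompleteSpace X]
    [NormedAddCommGroup Y] [InnerProductSpace ℝ Y] [CompleteSpace Y]
    (a : X → X → ℝ) (b : X → Y → ℝ)
    (ha_lin₁ : ∀ u, IsLinearMap ℝ (a u))
    (ha_lin₂ : ∀ v, IsLinearMap ℝ (fun u => a u v))
    (Ma : ℝ) (ha_cont : ∀ u v, |a u v| ≤ Ma * ‖u‖ * ‖v‖)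
    (ma : ℝ) (hma : 0 < ma) (ha_ell : ∀ u, ma * ‖u‖ ^ 2 ≤ a u u)
    (hb_lin₁ : ∀ v, IsLinearMap ℝ (b v))
    (hb_lin₂ : ∀ μ, IsLinearMap ℝ (fun v => b v μ))
    (Mb : ℝ) (hb_cont : ∀ v μ, |b v μ| ≤ Mb * ‖v‖ * ‖μ‖)
    (α : ℝ) (hα : 0 < α)
    (hinfsup : ∀ μ : Y, μ ≠ 0 →
      α ≤ ⨆ v : {v : X // v ≠ 0}, b v μ / (‖(v : X)‖ * ‖μ‖))
    (Λ : Set Y) (hΛclosed : IsClosed Λ) (hΛconv : Convex ℝ Λ) (hΛ0 : (0 : Y) ∈ Λ)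
    (f : X) :
    ∃! p : X × Y, p.2 ∈ Λ ∧
      (∀ v : X, a p.1 v + b v p.2 = ⟪f, v⟫) ∧
      (∀ μ ∈ Λ, b p.1 (μ - p.2) ≤ 0) := by
  set A := ContinuousLinearMap.ofIsLinearMap₂ a ha_lin₁ ha_lin₂ Ma ha_cont
  set B := ContinuousLinearMap.ofIsLinearMap₂ b hb_lin₁ hb_lin₂ Mb hb_cont
  have hA : IsCoercive A := ⟨ma, hma, fun u => by simpa [A, sq, mul_assoc] using ha_ell u⟩
  have hB : ∀ μ, α * ‖μ‖ ≤ ‖B.flip μ‖ := fun μ => by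
    rcases eq_or_ne μ 0 with rfl | hμ
    · simp
    · rw [← le_div_iff₀ (norm_pos_iff.mpr hμ)]
      exact (hinfsup μ hμ).trans (iSup_div_norm_mul_norm_le_norm_flip B μ)
  exact existsUnique_isMixedSolution A hA B hα hB hΛclosed hΛconv ⟨0, hΛ0⟩ f

theorem stmt0
    {X Y : Type*} [NormedAddCommGroup X] [InnerProductSpace ℝ X] [CompleteSpace X]
    [NormedAddCommGroup Y] [InnerProductSpace ℝ Y] [CompleteSpace Y]
    (a : X → X → ℝ) (b : X → Y → ℝ)
    (ha_lin₁ : ∀ u, IsLinearMap ℝ (a u))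
    (ha_lin₂ : ∀ v, IsLinearMap ℝ (fun u => a u v))
    (ha_symm : ∀ u v, a u v = a v u)
    (Ma : ℝ) (hMa : 0 < Ma) (ha_cont : ∀ u v, |a u v| ≤ Ma * ‖u‖ * ‖v‖)
    (ma : ℝ) (hma : 0 < ma) (ha_ell : ∀ u, ma * ‖u‖ ^ 2 ≤ a u u)
    (hb_lin₁ : ∀ v, IsLinearMap ℝ (b v))
    (hb_lin₂ : ∀ μ, IsLinearMap ℝ (fun v => b v μ))
    (Mb : ℝ) (hMb : 0 < Mb) (hb_cont : ∀ v μ, |b v μ| ≤ Mb * ‖v‖ * ‖μ‖)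
    (α : ℝ) (hα : 0 < α)
    (hinfsup : ∀ μ : Y, μ ≠ 0 →
      α ≤ ⨆ v : {v : X // v ≠ 0}, b v μ / (‖(v : X)‖ * ‖μ‖))
    (Λ : Set Y) (hΛclosed : IsClosed Λ) (hΛconv : Convex ℝ Λ) (hΛ0 : (0 : Y) ∈ Λ)
    (f : X) :
    ∃! p : X × Y, p.2 ∈ Λ ∧
      (∀ v : X, a p.1 v + b v p.2 = ⟪f, v⟫) ∧
      (∀ μ ∈ Λ, b p.1 (μ - p.2) ≤ 0) :=
  stmt0_general a b ha_lin₁ ha_lin₂ Ma ha_cont ma hma ha_ell hb_lin₁ hb_lin₂ Mb hb_cont α hα hinfsup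
    Λ hΛclosed hΛconv hΛ0 f
end

section
/- Let X, Y be Hilbert spaces and b : X × Y → ℝ a continuous bilinear form satisfying the inf-sup condition with constant α > 0. Then the operator B^t : Y → (Ker B)^0 ⊆ X', defined by ⟨B^t λ, v⟩ = b(v, λ), is a linear isomorphism from Y onto the annihilator of Ker B. -/
/-!
The inf-sup condition says exactly that `Bᵗ` is bounded below, `‖μ‖ ≤ α⁻¹ ‖Bᵗ μ‖`; this gives
injectivity and, by completeness of `Y`, a closed range. Transported to `X` by the Riesz map, the
range of `Bᵗ` is a closed subspace, hence equal to its double orthogonal complement, and its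
orthogonal complement is `Ker B`. Pulling back by the Riesz map turns `(Ker B)ᗮ` into the
annihilator of `Ker B`.
-/

open InnerProductSpace NNReal

theorem iSup_div_norm_le_opNorm {E : Type*} [NormedAddCommGroup E] [NormedSpace ℝ E]
    (f : StrongDual ℝ E) : ⨆ v : {v : E // v ≠ 0}, f v / ‖(v : E)‖ ≤ ‖f‖ := by
  refine Real.iSup_le (fun v => ?_) (norm_nonneg f)
  rw [div_le_iff₀ (norm_pos_iff.2 v.2)]
  exact (le_abs_self _).trans (f.le_opNorm v)

section RieszTranspose

variable {X Y : Type*} [NormedAddCommGroup X] [InnerProductSpace ℝ X] [CompleteSpace X]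
  [NormedAddCommGroup Y] [InnerProductSpace ℝ Y]

noncomputable def toDualSymmComp (T : Y →L[ℝ] StrongDual ℝ X) : Y →L[ℝ] X :=
  ((toDual ℝ X).symm.toContinuousLinearEquiv : StrongDual ℝ X ≃L[ℝ] X).toContinuousLinearMap ∘L T

theorem inner_toDualSymmComp_apply (T : Y →L[ℝ] StrongDual ℝ X) (μ : Y) (v : X) :
    ⟪toDualSymmComp T μ, v⟫_ℝ = T μ v :=
  toDual_symm_apply

theorem mem_orthogonal_range_toDualSymmComp_iff (T : Y →L[ℝ] StrongDual ℝ X) (v : X) :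
    v ∈ (toDualSymmComp T).rangeᗮ ↔ ∀ μ, T μ v = 0 := by
  simp only [Submodule.mem_orthogonal, LinearMap.mem_range, forall_exists_index,
    forall_apply_eq_imp_iff, ContinuousLinearMap.coe_coe, inner_toDualSymmComp_apply]

theorem range_eq_annihilator_of_antilipschitz [CompleteSpace Y]
    {T : Y →L[ℝ] StrongDual ℝ X} {K : ℝ≥0} (hT : AntilipschitzWith K T) :
    Set.range T = {l : StrongDual ℝ X | ∀ v, (∀ μ, T μ v = 0) → l v = 0} := by
  have hS : AntilipschitzWith K (toDualSymmComp T) := fun μ ν => by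
    simpa [toDualSymmComp, edist_eq_enorm_sub, ← map_sub] using hT μ ν
  have hclosed : IsClosed ((toDualSymmComp T).range : Set X) :=
    hS.isClosed_range (toDualSymmComp T).uniformContinuous
  have hrange : (toDualSymmComp T).range = (toDualSymmComp T).rangeᗮᗮ := by
    rw [Submodule.orthogonal_orthogonal_eq_closure, hclosed.submodule_topologicalClosure_eq]
  ext l
  have hl : l ∈ Set.range T ↔ (toDual ℝ X).symm l ∈ (toDualSymmComp T).range := by
    simp [toDualSymmComp]
  rw [hl, hrange, Submodule.mem_orthogonal]
  simp only [mem_orthogonal_range_toDualSymmComp_iff, real_inner_comm ((toDual ℝ X).symm l),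
    toDual_symm_apply, Set.mem_ofPred_eq]

end RieszTranspose

theorem stmt2_general
    {X Y : Type*} [NormedAddCommGroup X] [InnerProductSpace ℝ X] [CompleteSpace X]
    [NormedAddCommGroup Y] [InnerProductSpace ℝ Y] [CompleteSpace Y]
    (b : X → Y → ℝ)
    (B : X →L[ℝ] (Y →L[ℝ] ℝ)) (hB : ∀ v μ, B v μ = b v μ)
    (Bt : Y →L[ℝ] (X →L[ℝ] ℝ)) (hBt : ∀ μ v, Bt μ v = b v μ)
    (α : ℝ) (hα : 0 < α)
    (hinfsup : ∀ μ : Y,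
      ‖μ‖ ≤ α⁻¹ * ⨆ v : {v : X // v ≠ 0}, b v μ / ‖(v : X)‖) :
    Function.Injective Bt ∧
    Set.range Bt = {l : X →L[ℝ] ℝ | ∀ v : X, B v = 0 → l v = 0} ∧
    (∀ μ : Y, ‖μ‖ ≤ α⁻¹ * ‖Bt μ‖) := by
  have hbound : ∀ μ : Y, ‖μ‖ ≤ α⁻¹ * ‖Bt μ‖ := fun μ => by
    refine (hinfsup μ).trans (mul_le_mul_of_nonneg_left ?_ (inv_nonneg.2 hα.le))
    simpa only [hBt] using iSup_div_norm_le_opNorm (Bt μ)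
  have hanti : AntilipschitzWith ⟨α⁻¹, inv_nonneg.2 hα.le⟩ Bt :=
    Bt.antilipschitz_of_bound hbound
  refine ⟨hanti.injective, ?_, hbound⟩
  rw [range_eq_annihilator_of_antilipschitz hanti]
  simp only [ContinuousLinearMap.ext_iff, zero_apply, hB, hBt]

theorem stmt2
    {X Y : Type*} [NormedAddCommGroup X] [InnerProductSpace ℝ X] [CompleteSpace X]
    [NormedAddCommGroup Y] [InnerProductSpace ℝ Y] [CompleteSpace Y]
    (b : X → Y → ℝ)
    (hb_lin₁ : ∀ v, IsLinearMap ℝ (b v))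
    (hb_lin₂ : ∀ μ, IsLinearMap ℝ (fun v => b v μ))
    (Mb : ℝ) (hb_cont : ∀ v μ, |b v μ| ≤ Mb * ‖v‖ * ‖μ‖)
    (B : X →L[ℝ] (Y →L[ℝ] ℝ)) (hB : ∀ v μ, B v μ = b v μ)
    (Bt : Y →L[ℝ] (X →L[ℝ] ℝ)) (hBt : ∀ μ v, Bt μ v = b v μ)
    (α : ℝ) (hα : 0 < α)
    (hinfsup : ∀ μ : Y,
      ‖μ‖ ≤ α⁻¹ * ⨆ v : {v : X // v ≠ 0}, b v μ / ‖(v : X)‖) :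
    Function.Injective Bt ∧
    Set.range Bt = {l : X →L[ℝ] ℝ | ∀ v : X, B v = 0 → l v = 0} ∧
    (∀ μ : Y, ‖μ‖ ≤ α⁻¹ * ‖Bt μ‖) :=
  stmt2_general b B hB Bt hBt α hα hinfsup
end

section
/- Let X be a Hilbert space, a : X × X → ℝ symmetric, continuous, and X-elliptic, j : X → ℝ a continuous seminorm, and f ∈ X. Let u₀ be the unique solution of the variational inequality a(u₀, v − u₀) + j(v) − j(u₀) ≥ ⟨f, v − u₀⟩ for all v ∈ X, and define λ₀ ∈ X' by ⟨λ₀, v⟩ = ⟨f, v⟩ − a(u₀, v). Then λ₀ belongs to Λ̄ := { μ ∈ X' : ⟨μ, v⟩ ≤ j(v) for all v ∈ X } and ⟨λ₀, u₀⟩ = j(u₀). -/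
open scoped RealInnerProductSpace

theorem stmt6
    {X : Type*} [NormedAddCommGroup X] [InnerProductSpace ℝ X] [CompleteSpace X]
    (a : X → X → ℝ)
    (ha_lin₁ : ∀ u, IsLinearMap ℝ (a u))
    (ha_lin₂ : ∀ v, IsLinearMap ℝ (fun u => a u v))
    (ha_symm : ∀ u v, a u v = a v u)
    (Ma : ℝ) (ha_cont : ∀ u v, |a u v| ≤ Ma * ‖u‖ * ‖v‖)
    (ma : ℝ) (hma : 0 < ma) (ha_ell : ∀ u, ma * ‖u‖ ^ 2 ≤ a u u)
    (j : X → ℝ) (hj_cont : Continuous j)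
    (hj_smul : ∀ (t : ℝ) (v : X), j (t • v) = |t| * j v)
    (hj_add : ∀ v w, j (v + w) ≤ j v + j w)
    (f : X) (u₀ : X)
    (hVI : ∀ v : X, a u₀ (v - u₀) + j v - j u₀ ≥ ⟪f, v - u₀⟫)
    (lam₀ : X →L[ℝ] ℝ) (hlam₀ : ∀ v, lam₀ v = ⟪f, v⟫ - a u₀ v) :
    (lam₀ ∈ {μ : X →L[ℝ] ℝ | ∀ v, μ v ≤ j v}) ∧ lam₀ u₀ = j u₀ := by
  have hj0 : j 0 = 0 := by
    have := hj_smul 0 0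
    simpa using this
  have hle : ∀ v, lam₀ v ≤ j v := by
    intro v
    have h := hVI (u₀ + v)
    simp only [add_sub_cancel_left] at h
    have hjv : j (u₀ + v) - j u₀ ≤ j v := by
      have := hj_add u₀ v
      linarith
    rw [hlam₀]
    have : ⟪f, v⟫ - a u₀ v ≤ j (u₀ + v) - j u₀ := by linarith
    linarith
  refine ⟨hle, ?_⟩
  have hge : j u₀ ≤ lam₀ u₀ := by
    have h := hVI 0
    simp only [zero_sub] at h
    have hneg : a u₀ (-u₀) = -(a u₀ u₀) := (ha_lin₁ u₀).map_neg u₀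
    have hinner : ⟪f, -u₀⟫ = -⟪f, u₀⟫ := by
      simp [inner_neg_right]
    rw [hneg, hj0, hinner] at h
    rw [hlam₀]
    linarith
  exact le_antisymm (hle u₀) hge
end

section
/- Let X be a Hilbert space, a : X × X → ℝ symmetric, continuous, X-elliptic, j : X → ℝ a continuous seminorm, f ∈ X, and Λ̄ = { μ ∈ X' : ⟨μ, v⟩ ≤ j(v) for all v ∈ X }. Let u₀ solve the variational inequality a(u₀, v − u₀) + j(v) − j(u₀) ≥ ⟨f, v − u₀⟩ for all v ∈ X, and set λ₀ ∈ X' by ⟨λ₀, v⟩ = ⟨f, v⟩ − a(u₀, v). Then (u₀, λ₀) solves the mixed problem: a(u₀, v) + ⟨λ₀, v⟩ = ⟨f, v⟩ for all v ∈ X, and ⟨μ̄ − λ₀, u₀⟩ ≤ 0 for all μ̄ ∈ Λ̄. -/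
open scoped RealInnerProductSpace

theorem stmt7
    {X : Type*} [NormedAddCommGroup X] [InnerProductSpace ℝ X] [CompleteSpace X]
    (a : X → X → ℝ)
    (ha_lin₁ : ∀ u, IsLinearMap ℝ (a u))
    (ha_lin₂ : ∀ v, IsLinearMap ℝ (fun u => a u v))
    (ha_symm : ∀ u v, a u v = a v u)
    (Ma : ℝ) (ha_cont : ∀ u v, |a u v| ≤ Ma * ‖u‖ * ‖v‖)
    (ma : ℝ) (hma : 0 < ma) (ha_ell : ∀ u, ma * ‖u‖ ^ 2 ≤ a u u)
    (j : X → ℝ) (hj_cont : Continuous j)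
    (hj_smul : ∀ (t : ℝ) (v : X), j (t • v) = |t| * j v)
    (hj_add : ∀ v w, j (v + w) ≤ j v + j w)
    (f : X) (u₀ : X)
    (hVI : ∀ v : X, a u₀ (v - u₀) + j v - j u₀ ≥ ⟪f, v - u₀⟫)
    (lam₀ : X →L[ℝ] ℝ) (hlam₀ : ∀ v, lam₀ v = ⟪f, v⟫ - a u₀ v) :
    (∀ v : X, a u₀ v + lam₀ v = ⟪f, v⟫) ∧
    (∀ μ : X →L[ℝ] ℝ, (∀ v, μ v ≤ j v) → (μ - lam₀) u₀ ≤ 0) := by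
  have hlam_eq : lam₀ u₀ = j u₀ := by
    have h0 := hVI 0
    have h2 := hVI ((2 : ℝ) • u₀)
    have hs : (2 : ℝ) • u₀ - u₀ = u₀ := by
      rw [two_smul]; abel
    rw [hs, hj_smul] at h2
    have h0s : (0 : X) - u₀ = -u₀ := by abel
    rw [h0s, (ha_lin₁ u₀).map_neg] at h0
    have hj0 : j (0 : X) = 0 := by
      have := hj_smul 0 0
      simpa using this
    rw [hj0, inner_neg_right] at h0
    have h2' : lam₀ u₀ ≤ j u₀ := by
      rw [hlam₀]
      have ha2 : |(2:ℝ)| = 2 := by norm_num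
      rw [ha2] at h2
      linarith
    have h0' : j u₀ ≤ lam₀ u₀ := by
      rw [hlam₀]; linarith
    linarith
  constructor
  · intro v; rw [hlam₀]; ring
  · intro μ hμ
    have : (μ - lam₀) u₀ = μ u₀ - lam₀ u₀ := rfl
    rw [this, hlam_eq]
    linarith [hμ u₀]
end

section
/- Let X, M be Hilbert spaces, γ : X → M bounded linear with bounded right inverse, Y = M', b(v, μ) = ⟨μ, γ v⟩, B : X → Y' and B^t : Y → X' the associated operators. Let a : X × X → ℝ be symmetric, continuous, X-elliptic, j(v) a continuous seminorm with j(v)=0 whenever γv=0, f ∈ X. Let (ū, λ̄) solve the mixed problem with multiplier set Λ̄ = { μ ∈ X' : ⟨μ,v⟩ ≤ j(v) ∀v }, and suppose λ̄ ∈ Im B^t, say B^t λ̃ = λ̄. Then λ̃ ∈ Λ = { μ ∈ Y : ⟨μ, γv⟩ ≤ j(v) ∀v ∈ X } and (ū, λ̃) solves the mixed problem: a(ū, v) + ⟨λ̃, γ v⟩ = ⟨f, v⟩ for all v ∈ X, and ⟨μ − λ̃, γ ū⟩ ≤ 0 for all μ ∈ Λ. -/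
open scoped RealInnerProductSpace

theorem stmt9
    {X M : Type*} [NormedAddCommGroup X] [InnerProductSpace ℝ X] [CompleteSpace X]
    [NormedAddCommGroup M] [InnerProductSpace ℝ M] [CompleteSpace M]
    (γ : X →L[ℝ] M) (Z : M →L[ℝ] X) (hZright : ∀ m : M, γ (Z m) = m)
    (Bt : (M →L[ℝ] ℝ) →L[ℝ] (X →L[ℝ] ℝ)) (hBt : ∀ μ v, Bt μ v = μ (γ v))
    (a : X → X → ℝ)
    (ha_lin₁ : ∀ u, IsLinearMap ℝ (a u))
    (ha_lin₂ : ∀ v, IsLinearMap ℝ (fun u => a u v))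
    (ha_symm : ∀ u v, a u v = a v u)
    (Ma : ℝ) (ha_cont : ∀ u v, |a u v| ≤ Ma * ‖u‖ * ‖v‖)
    (ma : ℝ) (hma : 0 < ma) (ha_ell : ∀ u, ma * ‖u‖ ^ 2 ≤ a u u)
    (j : X → ℝ) (hj_cont : Continuous j)
    (hj_smul : ∀ (t : ℝ) (v : X), j (t • v) = |t| * j v)
    (hj_add : ∀ v w, j (v + w) ≤ j v + j w)
    (hj_ker : ∀ v : X, γ v = 0 → j v = 0)
    (f : X) (ubar : X) (lambar : X →L[ℝ] ℝ)
    (hlambar_mem : ∀ v : X, lambar v ≤ j v)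
    (hmixed₁ : ∀ v : X, a ubar v + lambar v = ⟪f, v⟫)
    (hmixed₂ : ∀ μ : X →L[ℝ] ℝ, (∀ v, μ v ≤ j v) → (μ - lambar) ubar ≤ 0)
    (hlambar_u : lambar ubar = j ubar)
    (lamtilde : M →L[ℝ] ℝ) (hlift : Bt lamtilde = lambar) :
    (∀ v : X, lamtilde (γ v) ≤ j v) ∧
    (∀ v : X, a ubar v + lamtilde (γ v) = ⟪f, v⟫) ∧
    (∀ μ : M →L[ℝ] ℝ, (∀ v : X, μ (γ v) ≤ j v) → (μ - lamtilde) (γ ubar) ≤ 0) := by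
  have key : ∀ v : X, lamtilde (γ v) = lambar v := by
    intro v; rw [← hBt, hlift]
  refine ⟨fun v => by rw [key]; exact hlambar_mem v,
    fun v => by rw [key]; exact hmixed₁ v, fun μ hμ => ?_⟩
  have : (μ - lamtilde) (γ ubar) = μ (γ ubar) - lambar ubar := by
    simp [key ubar]
  rw [this, hlambar_u]
  linarith [hμ ubar]
end

section
/- Let X be a Hilbert space, a : X × X → ℝ symmetric, continuous, X-elliptic, j a continuous seminorm, f ∈ X. If (u₁, λ₁) and (u₂, λ₂) both satisfy a(uᵢ, v) + ⟨λᵢ, v⟩ = ⟨f, v⟩ for all v ∈ X and ⟨μ − λᵢ, uᵢ⟩ ≤ 0 for all μ ∈ Λ̄ = { μ ∈ X' : ⟨μ, v⟩ ≤ j(v) ∀v }, with λ₁, λ₂ ∈ Λ̄, then u₁ = u₂ and λ₁ = λ₂. -/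
open scoped RealInnerProductSpace

theorem stmt12
    {X : Type*} [NormedAddCommGroup X] [InnerProductSpace ℝ X] [CompleteSpace X]
    (a : X → X → ℝ)
    (ha_lin₁ : ∀ u, IsLinearMap ℝ (a u))
    (ha_lin₂ : ∀ v, IsLinearMap ℝ (fun u => a u v))
    (ha_symm : ∀ u v, a u v = a v u)
    (Ma : ℝ) (ha_cont : ∀ u v, |a u v| ≤ Ma * ‖u‖ * ‖v‖)
    (ma : ℝ) (hma : 0 < ma) (ha_ell : ∀ u, ma * ‖u‖ ^ 2 ≤ a u u)
    (j : X → ℝ) (hj_cont : Continuous j)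
    (hj_smul : ∀ (t : ℝ) (v : X), j (t • v) = |t| * j v)
    (hj_add : ∀ v w, j (v + w) ≤ j v + j w)
    (f : X)
    (u₁ u₂ : X) (lam₁ lam₂ : X →L[ℝ] ℝ)
    (hlam₁ : ∀ v, lam₁ v ≤ j v) (hlam₂ : ∀ v, lam₂ v ≤ j v)
    (h₁ : ∀ v : X, a u₁ v + lam₁ v = ⟪f, v⟫)
    (h₂ : ∀ v : X, a u₂ v + lam₂ v = ⟪f, v⟫)
    (h₁' : ∀ μ : X →L[ℝ] ℝ, (∀ v, μ v ≤ j v) → (μ - lam₁) u₁ ≤ 0)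
    (h₂' : ∀ μ : X →L[ℝ] ℝ, (∀ v, μ v ≤ j v) → (μ - lam₂) u₂ ≤ 0) :
    u₁ = u₂ ∧ lam₁ = lam₂ := by
  have key : ∀ v, a (u₁ - u₂) v = (lam₂ - lam₁) v := by
    intro v
    have e1 := h₁ v
    have e2 := h₂ v
    have hsub : a (u₁ - u₂) v = a u₁ v - a u₂ v := (ha_lin₂ v).map_sub u₁ u₂
    simp only [ContinuousLinearMap.sub_apply]
    linarith
  have h12 : (lam₂ - lam₁) u₁ ≤ 0 := h₁' lam₂ hlam₂
  have h21 : (lam₁ - lam₂) u₂ ≤ 0 := h₂' lam₁ hlam₁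
  have hww : a (u₁ - u₂) (u₁ - u₂) ≤ 0 := by
    have := key (u₁ - u₂)
    simp only [ContinuousLinearMap.sub_apply, map_sub] at this h12 h21 ⊢
    linarith
  have hnorm : u₁ - u₂ = 0 := by
    have := ha_ell (u₁ - u₂)
    have hn : ‖u₁ - u₂‖ ^ 2 ≤ 0 := by nlinarith
    have : ‖u₁ - u₂‖ = 0 := by nlinarith [norm_nonneg (u₁ - u₂)]
    exact norm_eq_zero.mp this
  have hu : u₁ = u₂ := sub_eq_zero.mp hnorm
  refine ⟨hu, ?_⟩
  ext v
  have := key v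
  rw [hnorm] at this
  have hz : a 0 v = 0 := (ha_lin₂ v).map_zero
  simp only [ContinuousLinearMap.sub_apply] at this
  linarith
end
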